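/- arXiv:2305.06807 — 3 statements merged into one kernel-verified Lean document; each statement's English description precedes it below -/
import Mathlib

section
/- (Signaling gradient lemma, exact product-rule form.) Consider a finite Markov signaling game with finite nonempty types S, O, Σ, A, stochastic emission kernel q : S → O → ℝ, stochastic transition kernel p : S → A → S → ℝ, reward r : S → A → ℝ, and discount 0 ≤ γ < 1. Let the signaling scheme and receiver policy depend on a real parameter: φ : ℝ → S → O → Σ → ℝ and π : ℝ → O → Σ → A → ℝ, such that for every η the kernels φ η and π η are stochastic, and every entry map η ↦ φ η s o σ and η ↦ π η o σ a is continuously differentiable on ℝ. For each η define K η, ρ η, V η, W η by: (K η) s s' = ∑_{o,σ,a} q s o * φ η s o σ * π η o σ a * p s a s'; (ρ η) s = ∑_{o,σ,a} q s o * φ η s o σ * π η o σ a * r s a; (V η) s = ∑'_{k:ℕ} γ^k * ((((K η)^k).mulVec (ρ η)) s); (W η) s a = r s a + γ * ∑_{s'} p s a s' * (V η) s'. Then for every s₀ ∈ S and η₀ ∈ ℝ, the function η ↦ (V η) s₀ is differentiable at η₀ and deriv (fun η => (V η) s₀) η₀ = ∑'_{k:ℕ} γ^k * ∑_{s,o,σ,a}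 ((K η₀)^k) s₀ s * q s o * (deriv (fun η => φ η s o σ * π η o σ a) η₀) * (W η₀) s a. -/
set_option linter.unusedSectionVars false

open Finset

section Aux
variable {S : Type*} [Fintype S] [DecidableEq S]

private lemma powEntryNonneg {M : Matrix S S ℝ} (h0 : ∀ s s', 0 ≤ M s s') (k : ℕ) :
    ∀ s s', 0 ≤ (M ^ k) s s' := by
  induction k with
  | zero =>
    intro s s'
    rw [pow_zero]
    by_cases h : s = s' <;> simp [Matrix.one_apply, h]
  | succ k ih =>
    intro s s'
    rw [pow_succ, Matrix.mul_apply]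
    exact Finset.sum_nonneg fun j _ => mul_nonneg (ih s j) (h0 j s')

private lemma powRowSum {M : Matrix S S ℝ} (h1 : ∀ s, ∑ s', M s s' = 1) (k : ℕ) :
    ∀ s : S, ∑ s', (M ^ k) s s' = 1 := by
  induction k with
  | zero => intro s; simp [Matrix.one_apply]
  | succ k ih =>
    intro s
    rw [pow_succ]
    simp only [Matrix.mul_apply]
    rw [Finset.sum_comm]
    simp only [← Finset.mul_sum, h1, mul_one]
    exact ih s

private lemma mulVecAbsLe {M : Matrix S S ℝ} (h0 : ∀ s s', 0 ≤ M s s')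
    (h1 : ∀ s, ∑ s', M s s' = 1) {v : S → ℝ} {c : ℝ} (hv : ∀ s, |v s| ≤ c) (s : S) :
    |M.mulVec v s| ≤ c := by
  have hrw : M.mulVec v s = ∑ s', M s s' * v s' := by
    simp [Matrix.mulVec, dotProduct]
  rw [hrw]
  calc |∑ s', M s s' * v s'| ≤ ∑ s', |M s s' * v s'| := Finset.abs_sum_le_sum_abs _ _
    _ ≤ ∑ s', M s s' * c := by
        refine Finset.sum_le_sum fun s' _ => ?_
        rw [abs_mul, abs_of_nonneg (h0 s s')]
        exact mul_le_mul_of_nonneg_left (hv s') (h0 s s')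
    _ = c := by rw [← Finset.sum_mul, h1, one_mul]

private lemma neumannAux {γ : ℝ} (hγ0 : 0 ≤ γ) (hγ1 : γ < 1) {M : Matrix S S ℝ}
    (h0 : ∀ s s', 0 ≤ M s s') (h1 : ∀ s, ∑ s', M s s' = 1) (g : S → ℝ) {c : ℝ}
    (hg : ∀ s, |g s| ≤ c) :
    (∀ s, Summable fun k : ℕ => γ ^ k * ((M ^ k).mulVec g) s) ∧
      (∀ s, (∑' k : ℕ, γ ^ k * ((M ^ k).mulVec g) s) =
        g s + γ * ∑ s', M s s' * ∑' k : ℕ, γ ^ k * ((M ^ k).mulVec g) s') := by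
  have hbd : ∀ (k : ℕ) (s : S), |((M ^ k).mulVec g) s| ≤ c :=
    fun k s => mulVecAbsLe (powEntryNonneg h0 k) (powRowSum h1 k) hg s
  have hsum : ∀ s, Summable fun k : ℕ => γ ^ k * ((M ^ k).mulVec g) s := by
    intro s
    refine Summable.of_norm_bounded
      ((summable_geometric_of_lt_one hγ0 hγ1).mul_right c) fun k => ?_
    rw [Real.norm_eq_abs, abs_mul, abs_of_nonneg (pow_nonneg hγ0 k)]
    exact mul_le_mul_of_nonneg_left (hbd k s) (pow_nonneg hγ0 k)
  refine ⟨hsum, fun s => ?_⟩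
  rw [(hsum s).tsum_eq_zero_add]
  congr 1
  · simp [Matrix.one_mulVec]
  · have hstep : ∀ k : ℕ, γ ^ (k + 1) * ((M ^ (k + 1)).mulVec g) s
        = ∑ s', M s s' * (γ * (γ ^ k * ((M ^ k).mulVec g) s')) := by
      intro k
      have h2 : (M ^ (k + 1)).mulVec g = M.mulVec ((M ^ k).mulVec g) := by
        rw [Matrix.mulVec_mulVec, ← pow_succ']
      rw [h2]
      have h3 : (M.mulVec ((M ^ k).mulVec g)) s = ∑ s', M s s' * ((M ^ k).mulVec g) s' := by
        simp [Matrix.mulVec, dotProduct]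
      rw [h3, Finset.mul_sum]
      exact Finset.sum_congr rfl fun s' _ => by ring
    calc (∑' k : ℕ, γ ^ (k + 1) * ((M ^ (k + 1)).mulVec g) s)
        = ∑' k : ℕ, ∑ s', M s s' * (γ * (γ ^ k * ((M ^ k).mulVec g) s')) := tsum_congr hstep
      _ = ∑ s', ∑' k : ℕ, M s s' * (γ * (γ ^ k * ((M ^ k).mulVec g) s')) :=
          Summable.tsum_finsetSum fun s' _ => (((hsum s').mul_left γ).mul_left (M s s'))
      _ = ∑ s', M s s' * (γ * ∑' k : ℕ, γ ^ k * ((M ^ k).mulVec g) s') := by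
          refine Finset.sum_congr rfl fun s' _ => ?_
          rw [tsum_mul_left, tsum_mul_left]
      _ = γ * ∑ s', M s s' * ∑' k : ℕ, γ ^ k * ((M ^ k).mulVec g) s' := by
          rw [Finset.mul_sum]
          exact Finset.sum_congr rfl fun s' _ => by ring

private lemma fixpointZero [Nonempty S] {γ : ℝ} (hγ0 : 0 ≤ γ) (hγ1 : γ < 1)
    {M : Matrix S S ℝ} (h0 : ∀ s s', 0 ≤ M s s') (h1 : ∀ s, ∑ s', M s s' = 1)
    {x : S → ℝ} (hx : ∀ s, x s = γ * ∑ s', M s s' * x s') : ∀ s, x s = 0 := by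
  obtain ⟨s₁, -, hs₁⟩ := Finset.exists_max_image (Finset.univ : Finset S) (fun s => |x s|)
    ⟨Classical.arbitrary S, Finset.mem_univ _⟩
  have key : |x s₁| ≤ γ * |x s₁| := by
    calc |x s₁| = |γ * ∑ s', M s₁ s' * x s'| := by rw [← hx s₁]
      _ = γ * |∑ s', M s₁ s' * x s'| := by rw [abs_mul, abs_of_nonneg hγ0]
      _ ≤ γ * (∑ s', M s₁ s' * |x s₁|) := by
          refine mul_le_mul_of_nonneg_left ?_ hγ0
          calc |∑ s', M s₁ s' * x s'| ≤ ∑ s', |M s₁ s' * x s'| := Finset.abs_sum_le_sum_abs _ _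
            _ ≤ ∑ s', M s₁ s' * |x s₁| := by
                refine Finset.sum_le_sum fun s' _ => ?_
                rw [abs_mul, abs_of_nonneg (h0 s₁ s')]
                exact mul_le_mul_of_nonneg_left (hs₁ s' (Finset.mem_univ _)) (h0 s₁ s')
      _ = γ * |x s₁| := by rw [← Finset.sum_mul, h1, one_mul]
  have h0' : |x s₁| ≤ 0 := by nlinarith [abs_nonneg (x s₁)]
  intro s
  have h1' : |x s| ≤ 0 := le_trans (hs₁ s (Finset.mem_univ s)) h0'
  exact abs_eq_zero.mp (le_antisymm h1' (abs_nonneg _))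

private noncomputable def dAux (K K' : ℝ → Matrix S S ℝ) (ρ ρ' : ℝ → S → ℝ) :
    ℕ → ℝ → S → ℝ
  | 0 => ρ'
  | (k + 1) => fun η s => ∑ s',
      (K' η s s' * ((K η ^ k).mulVec (ρ η)) s' + K η s s' * dAux K K' ρ ρ' k η s')

private lemma hasDerivAt_dAux (K K' : ℝ → Matrix S S ℝ) (ρ ρ' : ℝ → S → ℝ)
    (hKd : ∀ η s s', HasDerivAt (fun x => K x s s') (K' η s s') η)
    (hρd : ∀ η s, HasDerivAt (fun x => ρ x s) (ρ' η s) η) :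
    ∀ (k : ℕ) (η : ℝ) (s : S),
      HasDerivAt (fun x => ((K x ^ k).mulVec (ρ x)) s) (dAux K K' ρ ρ' k η s) η := by
  intro k
  induction k with
  | zero =>
    intro η s
    have he : (fun x => ((K x ^ 0).mulVec (ρ x)) s) = fun x => ρ x s := by
      funext x; rw [pow_zero, Matrix.one_mulVec]
    rw [he]
    exact hρd η s
  | succ k ih =>
    intro η s
    have he : (fun x => ((K x ^ (k + 1)).mulVec (ρ x)) s)
        = fun x => ∑ s', K x s s' * ((K x ^ k).mulVec (ρ x)) s' := by
      funext x
      have h2 : (K x ^ (k + 1)).mulVec (ρ x) = (K x).mulVec ((K x ^ k).mulVec (ρ x)) := by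
        rw [Matrix.mulVec_mulVec, ← pow_succ']
      rw [h2]
      simp [Matrix.mulVec, dotProduct]
    rw [he]
    have hd : dAux K K' ρ ρ' (k + 1) η s = ∑ s',
        (K' η s s' * ((K η ^ k).mulVec (ρ η)) s' + K η s s' * dAux K K' ρ ρ' k η s') := by
      simp [dAux]
    rw [hd]
    exact HasDerivAt.fun_sum fun s' _ => (hKd η s s').mul (ih η s')

private lemma dAux_bound [Nonempty S] (K K' : ℝ → Matrix S S ℝ) (ρ ρ' : ℝ → S → ℝ)
    {η B R : ℝ}
    (hK0 : ∀ s s', 0 ≤ K η s s') (hK1 : ∀ s, ∑ s', K η s s' = 1)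
    (hρR : ∀ s, |ρ η s| ≤ R)
    (hK'B : ∀ s, ∑ s', |K' η s s'| ≤ B)
    (hρ'B : ∀ s, |ρ' η s| ≤ B * R) :
    ∀ (k : ℕ) (s : S), |dAux K K' ρ ρ' k η s| ≤ B * R * ((k : ℝ) + 1) := by
  have hBR : 0 ≤ B * R := le_trans (abs_nonneg _) (hρ'B (Classical.arbitrary S))
  have hR0 : 0 ≤ R := le_trans (abs_nonneg _) (hρR (Classical.arbitrary S))
  intro k
  induction k with
  | zero =>
    intro s
    have : |ρ' η s| ≤ B * R := hρ'B s
    simpa [dAux] using this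
  | succ k ih =>
    intro s
    have hv : ∀ s', |((K η ^ k).mulVec (ρ η)) s'| ≤ R :=
      fun s' => mulVecAbsLe (powEntryNonneg hK0 k) (powRowSum hK1 k) hρR s'
    have hd : dAux K K' ρ ρ' (k + 1) η s = ∑ s',
        (K' η s s' * ((K η ^ k).mulVec (ρ η)) s' + K η s s' * dAux K K' ρ ρ' k η s') := by
      simp [dAux]
    rw [hd]
    have step1 : |∑ s', (K' η s s' * ((K η ^ k).mulVec (ρ η)) s'
        + K η s s' * dAux K K' ρ ρ' k η s')|
        ≤ ∑ s', (|K' η s s'| * R + K η s s' * (B * R * ((k : ℝ) + 1))) := by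
      refine le_trans (Finset.abs_sum_le_sum_abs _ _) (Finset.sum_le_sum fun s' _ => ?_)
      refine le_trans (abs_add_le _ _) (add_le_add ?_ ?_)
      · rw [abs_mul]
        exact mul_le_mul_of_nonneg_left (hv s') (abs_nonneg _)
      · rw [abs_mul, abs_of_nonneg (hK0 s s')]
        exact mul_le_mul_of_nonneg_left (ih s') (hK0 s s')
    refine le_trans step1 ?_
    have step2 : ∑ s', (|K' η s s'| * R + K η s s' * (B * R * ((k : ℝ) + 1)))
        = (∑ s', |K' η s s'|) * R + (∑ s', K η s s') * (B * R * ((k : ℝ) + 1)) := by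
      rw [Finset.sum_add_distrib, Finset.sum_mul, Finset.sum_mul]
    rw [step2, hK1 s, one_mul]
    have : (∑ s', |K' η s s'|) * R ≤ B * R :=
      mul_le_mul_of_nonneg_right (hK'B s) hR0
    push_cast
    nlinarith [this]

private lemma sumComm4 {O Sg A S' : Type*} [Fintype O] [Fintype Sg] [Fintype A] [Fintype S']
    (f : O → Sg → A → S' → ℝ) :
    ∑ s', ∑ o, ∑ σ, ∑ a, f o σ a s' = ∑ o, ∑ σ, ∑ a, ∑ s', f o σ a s' := by
  rw [Finset.sum_comm]
  refine Finset.sum_congr rfl fun o _ => ?_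
  rw [Finset.sum_comm]
  refine Finset.sum_congr rfl fun σ _ => ?_
  rw [Finset.sum_comm]

end Aux

set_option maxHeartbeats 1000000 in
/-- Signaling gradient lemma (exact product-rule form): the derivative of the
sender's value function w.r.t. the signaling parameter is the discounted sum,
over states visited, of the derivative of `φ·π` times the marginal action
value `W`. -/
theorem stmt_3 {S O Sg A : Type*}
    [Fintype S] [Fintype O] [Fintype Sg] [Fintype A]
    [Nonempty S] [Nonempty O] [Nonempty Sg] [Nonempty A] [DecidableEq S]
    (q : S → O → ℝ) (p : S → A → S → ℝ) (r : S → A → ℝ)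
    (γ : ℝ) (hγ0 : 0 ≤ γ) (hγ1 : γ < 1)
    (φ : ℝ → S → O → Sg → ℝ) (π : ℝ → O → Sg → A → ℝ)
    (hq0 : ∀ s o, 0 ≤ q s o) (hq1 : ∀ s, ∑ o, q s o = 1)
    (hp0 : ∀ s a s', 0 ≤ p s a s') (hp1 : ∀ s a, ∑ s', p s a s' = 1)
    (hφ0 : ∀ η s o σ, 0 ≤ φ η s o σ) (hφ1 : ∀ η s o, ∑ σ, φ η s o σ = 1)
    (hπ0 : ∀ η o σ a, 0 ≤ π η o σ a) (hπ1 : ∀ η o σ, ∑ a, π η o σ a = 1)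
    (hφC : ∀ s o σ, ContDiff ℝ 1 (fun η => φ η s o σ))
    (hπC : ∀ o σ a, ContDiff ℝ 1 (fun η => π η o σ a))
    (K : ℝ → Matrix S S ℝ)
    (hK : ∀ η s s', K η s s' = ∑ o, ∑ σ, ∑ a, q s o * φ η s o σ * π η o σ a * p s a s')
    (ρ : ℝ → S → ℝ)
    (hρ : ∀ η s, ρ η s = ∑ o, ∑ σ, ∑ a, q s o * φ η s o σ * π η o σ a * r s a)
    (V : ℝ → S → ℝ)
    (hV : ∀ η s, V η s = ∑' k : ℕ, γ ^ k * (((K η) ^ k).mulVec (ρ η)) s)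
    (W : ℝ → S → A → ℝ)
    (hW : ∀ η s a, W η s a = r s a + γ * ∑ s', p s a s' * V η s')
    (s₀ : S) (η₀ : ℝ) :
    DifferentiableAt ℝ (fun η => V η s₀) η₀ ∧
    deriv (fun η => V η s₀) η₀ =
      ∑' k : ℕ, γ ^ k * ∑ s, ∑ o, ∑ σ, ∑ a,
        ((K η₀) ^ k) s₀ s * q s o *
          deriv (fun η => φ η s o σ * π η o σ a) η₀ * W η₀ s a := by
  classical
  have hγn : ‖γ‖ < 1 := by rw [Real.norm_eq_abs, abs_of_nonneg hγ0]; exact hγ1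
  have hq_le1 : ∀ s o, q s o ≤ 1 := by
    intro s o
    rw [← hq1 s]
    exact Finset.single_le_sum (fun o' _ => hq0 s o') (Finset.mem_univ o)
  have hφπd : ∀ (η : ℝ) (s : S) (o : O) (σ : Sg) (a : A),
      HasDerivAt (fun x => φ x s o σ * π x o σ a)
        (deriv (fun x => φ x s o σ * π x o σ a) η) η := by
    intro η s o σ a
    exact (((hφC s o σ).differentiable one_ne_zero η).mul
      ((hπC o σ a).differentiable one_ne_zero η)).hasDerivAt
  -- the derivative kernels
  set K' : ℝ → Matrix S S ℝ := fun η => Matrix.of fun s s' =>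
    ∑ o, ∑ σ, ∑ a, q s o * deriv (fun x => φ x s o σ * π x o σ a) η * p s a s' with hK'def
  set ρ' : ℝ → S → ℝ := fun η s =>
    ∑ o, ∑ σ, ∑ a, q s o * deriv (fun x => φ x s o σ * π x o σ a) η * r s a with hρ'def
  have hK'app : ∀ η s s', K' η s s' = ∑ o, ∑ σ, ∑ a,
      q s o * deriv (fun x => φ x s o σ * π x o σ a) η * p s a s' := by
    intro η s s'; rw [hK'def]; rfl
  have hρ'app : ∀ η s, ρ' η s = ∑ o, ∑ σ, ∑ a,
      q s o * deriv (fun x => φ x s o σ * π x o σ a) η * r s a := by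
    intro η s; rw [hρ'def]
  -- entrywise derivatives of K and ρ
  have hKd : ∀ η s s', HasDerivAt (fun x => K x s s') (K' η s s') η := by
    intro η s s'
    have he : (fun x => K x s s') = fun x =>
        ∑ o, ∑ σ, ∑ a, q s o * φ x s o σ * π x o σ a * p s a s' :=
      funext fun x => hK x s s'
    rw [he, hK'app η s s']
    refine HasDerivAt.fun_sum fun o _ => HasDerivAt.fun_sum fun σ _ => HasDerivAt.fun_sum fun a _ => ?_
    have h1 : (fun x => q s o * φ x s o σ * π x o σ a * p s a s')
        = fun x => q s o * (φ x s o σ * π x o σ a) * p s a s' := by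
      funext x; ring
    rw [h1]
    exact ((hφπd η s o σ a).const_mul (q s o)).mul_const (p s a s')
  have hρd : ∀ η s, HasDerivAt (fun x => ρ x s) (ρ' η s) η := by
    intro η s
    have he : (fun x => ρ x s) = fun x =>
        ∑ o, ∑ σ, ∑ a, q s o * φ x s o σ * π x o σ a * r s a :=
      funext fun x => hρ x s
    rw [he, hρ'app η s]
    refine HasDerivAt.fun_sum fun o _ => HasDerivAt.fun_sum fun σ _ => HasDerivAt.fun_sum fun a _ => ?_
    have h1 : (fun x => q s o * φ x s o σ * π x o σ a * r s a)
        = fun x => q s o * (φ x s o σ * π x o σ a) * r s a := by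
      funext x; ring
    rw [h1]
    exact ((hφπd η s o σ a).const_mul (q s o)).mul_const (r s a)
  -- stochasticity of K
  have hK0 : ∀ η s s', 0 ≤ K η s s' := by
    intro η s s'
    rw [hK]
    exact Finset.sum_nonneg fun o _ => Finset.sum_nonneg fun σ _ =>
      Finset.sum_nonneg fun a _ => mul_nonneg
        (mul_nonneg (mul_nonneg (hq0 s o) (hφ0 η s o σ)) (hπ0 η o σ a)) (hp0 s a s')
  have hQ : ∀ η s, ∑ o, ∑ σ, ∑ a, q s o * φ η s o σ * π η o σ a = 1 := by
    intro η s
    have h1 : ∀ (o : O) (σ : Sg), ∑ a, q s o * φ η s o σ * π η o σ a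
        = q s o * φ η s o σ := by
      intro o σ; rw [← Finset.mul_sum, hπ1, mul_one]
    have h2 : ∀ o : O, ∑ σ, q s o * φ η s o σ = q s o := by
      intro o; rw [← Finset.mul_sum, hφ1, mul_one]
    simp only [h1, h2]
    exact hq1 s
  have hK1 : ∀ η s, ∑ s', K η s s' = 1 := by
    intro η s
    calc ∑ s', K η s s'
        = ∑ s', ∑ o, ∑ σ, ∑ a, q s o * φ η s o σ * π η o σ a * p s a s' :=
          Finset.sum_congr rfl fun s' _ => hK η s s'
      _ = ∑ o, ∑ σ, ∑ a, ∑ s', q s o * φ η s o σ * π η o σ a * p s a s' := sumComm4 _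
      _ = ∑ o, ∑ σ, ∑ a, q s o * φ η s o σ * π η o σ a := by
          refine Finset.sum_congr rfl fun o _ => Finset.sum_congr rfl fun σ _ =>
            Finset.sum_congr rfl fun a _ => ?_
          rw [← Finset.mul_sum, hp1, mul_one]
      _ = 1 := hQ η s
  -- reward bound
  set R : ℝ := ∑ s : S, ∑ a : A, |r s a| with hRdef
  have hrR : ∀ s a, |r s a| ≤ R := by
    intro s a
    have h1 : |r s a| ≤ ∑ a', |r s a'| :=
      Finset.single_le_sum (f := fun a' => |r s a'|) (fun a' _ => abs_nonneg _)
        (Finset.mem_univ a)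
    refine le_trans h1 ?_
    exact Finset.single_le_sum (f := fun s => ∑ a', |r s a'|)
      (fun s' _ => Finset.sum_nonneg fun a' _ => abs_nonneg _) (Finset.mem_univ s)
  have hR0 : 0 ≤ R :=
    le_trans (abs_nonneg _) (hrR (Classical.arbitrary S) (Classical.arbitrary A))
  have hρR : ∀ η s, |ρ η s| ≤ R := by
    intro η s
    rw [hρ]
    calc |∑ o, ∑ σ, ∑ a, q s o * φ η s o σ * π η o σ a * r s a|
        ≤ ∑ o, ∑ σ, ∑ a, |q s o * φ η s o σ * π η o σ a * r s a| := by
          refine le_trans (Finset.abs_sum_le_sum_abs _ _) (Finset.sum_le_sum fun o _ => ?_)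
          refine le_trans (Finset.abs_sum_le_sum_abs _ _) (Finset.sum_le_sum fun σ _ => ?_)
          exact Finset.abs_sum_le_sum_abs _ _
      _ ≤ ∑ o, ∑ σ, ∑ a, q s o * φ η s o σ * π η o σ a * R := by
          refine Finset.sum_le_sum fun o _ => Finset.sum_le_sum fun σ _ =>
            Finset.sum_le_sum fun a _ => ?_
          have hnn : 0 ≤ q s o * φ η s o σ * π η o σ a :=
            mul_nonneg (mul_nonneg (hq0 s o) (hφ0 η s o σ)) (hπ0 η o σ a)
          rw [abs_mul, abs_of_nonneg hnn]
          exact mul_le_mul_of_nonneg_left (hrR s a) hnn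
      _ = R := by
          simp only [← Finset.sum_mul]
          rw [hQ η s, one_mul]
  -- uniform bound for the derivative kernels on a compact slab
  set G : ℝ → ℝ := fun η => ∑ s : S, ∑ o : O, ∑ σ : Sg, ∑ a : A,
    |deriv (fun x => φ x s o σ * π x o σ a) η| with hGdef
  have hGapp : ∀ η, G η = ∑ s : S, ∑ o : O, ∑ σ : Sg, ∑ a : A,
      |deriv (fun x => φ x s o σ * π x o σ a) η| := fun η => by rw [hGdef]
  have hGcont : Continuous G := by
    rw [hGdef]
    refine continuous_finset_sum _ fun s _ => continuous_finset_sum _ fun o _ =>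
      continuous_finset_sum _ fun σ _ => continuous_finset_sum _ fun a _ => ?_
    exact (((hφC s o σ).mul (hπC o σ a)).continuous_deriv le_rfl).abs
  have hGb : ∀ η s, ∑ o, ∑ σ, ∑ a, |deriv (fun x => φ x s o σ * π x o σ a) η| ≤ G η := by
    intro η s
    rw [hGapp]
    exact Finset.single_le_sum
      (f := fun s => ∑ o, ∑ σ, ∑ a, |deriv (fun x => φ x s o σ * π x o σ a) η|)
      (fun s' _ => Finset.sum_nonneg fun o _ => Finset.sum_nonneg fun σ _ =>
        Finset.sum_nonneg fun a _ => abs_nonneg _) (Finset.mem_univ s)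
  obtain ⟨B, hB⟩ := (isCompact_Icc (a := η₀ - 1) (b := η₀ + 1)).exists_bound_of_continuousOn
    hGcont.continuousOn
  have hGB : ∀ η ∈ Set.Icc (η₀ - 1) (η₀ + 1), G η ≤ B := fun η hη =>
    le_trans (le_abs_self _) (by rw [← Real.norm_eq_abs]; exact hB η hη)
  have hρ'B : ∀ η ∈ Set.Icc (η₀ - 1) (η₀ + 1), ∀ s, |ρ' η s| ≤ B * R := by
    intro η hη s
    rw [hρ'app]
    calc |∑ o, ∑ σ, ∑ a, q s o * deriv (fun x => φ x s o σ * π x o σ a) η * r s a|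
        ≤ ∑ o, ∑ σ, ∑ a, |q s o * deriv (fun x => φ x s o σ * π x o σ a) η * r s a| := by
          refine le_trans (Finset.abs_sum_le_sum_abs _ _) (Finset.sum_le_sum fun o _ => ?_)
          refine le_trans (Finset.abs_sum_le_sum_abs _ _) (Finset.sum_le_sum fun σ _ => ?_)
          exact Finset.abs_sum_le_sum_abs _ _
      _ ≤ ∑ o, ∑ σ, ∑ a, |deriv (fun x => φ x s o σ * π x o σ a) η| * R := by
          refine Finset.sum_le_sum fun o _ => Finset.sum_le_sum fun σ _ =>
            Finset.sum_le_sum fun a _ => ?_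
          rw [abs_mul, abs_mul, abs_of_nonneg (hq0 s o)]
          have h1 : q s o * |deriv (fun x => φ x s o σ * π x o σ a) η|
              ≤ |deriv (fun x => φ x s o σ * π x o σ a) η| :=
            mul_le_of_le_one_left (abs_nonneg _) (hq_le1 s o)
          exact mul_le_mul h1 (hrR s a) (abs_nonneg _) (abs_nonneg _)
      _ = (∑ o, ∑ σ, ∑ a, |deriv (fun x => φ x s o σ * π x o σ a) η|) * R := by
          simp only [← Finset.sum_mul]
      _ ≤ B * R := mul_le_mul_of_nonneg_right (le_trans (hGb η s) (hGB η hη)) hR0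
  have hK'B : ∀ η ∈ Set.Icc (η₀ - 1) (η₀ + 1), ∀ s, ∑ s', |K' η s s'| ≤ B := by
    intro η hη s
    calc ∑ s', |K' η s s'|
        ≤ ∑ s', ∑ o, ∑ σ, ∑ a,
            q s o * |deriv (fun x => φ x s o σ * π x o σ a) η| * p s a s' := by
          refine Finset.sum_le_sum fun s' _ => ?_
          rw [hK'app]
          refine le_trans (Finset.abs_sum_le_sum_abs _ _) (Finset.sum_le_sum fun o _ => ?_)
          refine le_trans (Finset.abs_sum_le_sum_abs _ _) (Finset.sum_le_sum fun σ _ => ?_)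
          refine le_trans (Finset.abs_sum_le_sum_abs _ _) (Finset.sum_le_sum fun a _ => ?_)
          rw [abs_mul, abs_mul, abs_of_nonneg (hq0 s o), abs_of_nonneg (hp0 s a s')]
      _ = ∑ o, ∑ σ, ∑ a, ∑ s',
            q s o * |deriv (fun x => φ x s o σ * π x o σ a) η| * p s a s' := sumComm4 _
      _ = ∑ o, ∑ σ, ∑ a, q s o * |deriv (fun x => φ x s o σ * π x o σ a) η| := by
          refine Finset.sum_congr rfl fun o _ => Finset.sum_congr rfl fun σ _ =>
            Finset.sum_congr rfl fun a _ => ?_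
          rw [← Finset.mul_sum, hp1, mul_one]
      _ ≤ ∑ o, ∑ σ, ∑ a, |deriv (fun x => φ x s o σ * π x o σ a) η| := by
          refine Finset.sum_le_sum fun o _ => Finset.sum_le_sum fun σ _ =>
            Finset.sum_le_sum fun a _ => ?_
          exact mul_le_of_le_one_left (abs_nonneg _) (hq_le1 s o)
      _ ≤ B := le_trans (hGb η s) (hGB η hη)
  -- summable bound sequence
  have hmem : η₀ ∈ Set.Ioo (η₀ - 1) (η₀ + 1) := ⟨by linarith, by linarith⟩
  have hsub : Set.Ioo (η₀ - 1) (η₀ + 1) ⊆ Set.Icc (η₀ - 1) (η₀ + 1) := Set.Ioo_subset_Icc_self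
  have husum : Summable (fun k : ℕ => γ ^ k * (B * R * ((k : ℝ) + 1))) := by
    have h1 : Summable fun k : ℕ => (k : ℝ) * γ ^ k := by
      simpa using summable_pow_mul_geometric_of_norm_lt_one 1 hγn
    have h2 : Summable fun k : ℕ => γ ^ k := summable_geometric_of_lt_one hγ0 hγ1
    have h3 := (h1.add h2).mul_left (B * R)
    refine h3.congr fun k => ?_
    ring
  have hneu : ∀ η, (∀ s, Summable fun k : ℕ => γ ^ k * ((K η ^ k).mulVec (ρ η)) s) ∧
      (∀ s, (∑' k : ℕ, γ ^ k * ((K η ^ k).mulVec (ρ η)) s) =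
        ρ η s + γ * ∑ s', K η s s' * ∑' k : ℕ, γ ^ k * ((K η ^ k).mulVec (ρ η)) s') :=
    fun η => neumannAux hγ0 hγ1 (hK0 η) (hK1 η) (ρ η) (hρR η)
  -- differentiability of V
  set DV : S → ℝ := fun s => ∑' k : ℕ, γ ^ k * dAux K K' ρ ρ' k η₀ s with hDVdef
  have hVd : ∀ s, HasDerivAt (fun η => V η s) (DV s) η₀ := by
    intro s
    have he : (fun η => V η s) = fun η => ∑' k : ℕ, γ ^ k * ((K η ^ k).mulVec (ρ η)) s :=
      funext fun η => hV η s
    have hDVs : DV s = ∑' k : ℕ, γ ^ k * dAux K K' ρ ρ' k η₀ s := by rw [hDVdef]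
    rw [he, hDVs]
    refine hasDerivAt_tsum_of_isPreconnected husum isOpen_Ioo
      (convex_Ioo (η₀ - 1) (η₀ + 1)).isPreconnected
      (g := fun k η => γ ^ k * ((K η ^ k).mulVec (ρ η)) s)
      (g' := fun k η => γ ^ k * dAux K K' ρ ρ' k η s)
      ?_ ?_ hmem ?_ hmem
    · intro k η _
      exact (hasDerivAt_dAux K K' ρ ρ' hKd hρd k η s).const_mul (γ ^ k)
    · intro k η hη
      rw [Real.norm_eq_abs, abs_mul, abs_of_nonneg (pow_nonneg hγ0 k)]
      exact mul_le_mul_of_nonneg_left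
        (dAux_bound K K' ρ ρ' (hK0 η) (hK1 η) (hρR η) (hK'B η (hsub hη)) (hρ'B η (hsub hη)) k s)
        (pow_nonneg hγ0 k)
    · exact (hneu η₀).1 s
  -- Bellman equation for V
  have hBell : ∀ η s, V η s = ρ η s + γ * ∑ s', K η s s' * V η s' := by
    intro η s
    rw [hV η s, (hneu η).2 s]
    simp only [← hV]
  -- differentiate the Bellman equation
  have hDVeq : ∀ s, DV s = ρ' η₀ s + γ * ∑ s',
      (K' η₀ s s' * V η₀ s' + K η₀ s s' * DV s') := by
    intro s
    have halt : HasDerivAt (fun η => V η s)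
        (ρ' η₀ s + γ * ∑ s', (K' η₀ s s' * V η₀ s' + K η₀ s s' * DV s')) η₀ := by
      have he : (fun η => V η s) = fun η => ρ η s + γ * ∑ s', K η s s' * V η s' :=
        funext fun η => hBell η s
      rw [he]
      exact (hρd η₀ s).add
        ((HasDerivAt.fun_sum fun s' _ => (hKd η₀ s s').mul (hVd s')).const_mul γ)
    exact (hVd s).unique halt
  -- the source term g
  set g : S → ℝ := fun s => ρ' η₀ s + γ * ∑ s', K' η₀ s s' * V η₀ s' with hgdef
  have hgapp : ∀ s, g s = ρ' η₀ s + γ * ∑ s', K' η₀ s s' * V η₀ s' := fun s => by rw [hgdef]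
  have hDVfix : ∀ s, DV s = g s + γ * ∑ s', K η₀ s s' * DV s' := by
    intro s
    rw [hDVeq s, hgapp s]
    simp only [Finset.sum_add_distrib, mul_add]
    ring
  -- the Neumann-series solution with source g
  set cg : ℝ := ∑ s, |g s| with hcgdef
  have hgc : ∀ s, |g s| ≤ cg := fun s => by
    rw [hcgdef]
    exact Finset.single_le_sum (f := fun s' => |g s'|) (fun s' _ => abs_nonneg _)
      (Finset.mem_univ s)
  have hneu2 := neumannAux hγ0 hγ1 (hK0 η₀) (hK1 η₀) g hgc
  set Vd : S → ℝ := fun s => ∑' k : ℕ, γ ^ k * ((K η₀ ^ k).mulVec g) s with hVddef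
  have hVdapp : ∀ s, Vd s = ∑' k : ℕ, γ ^ k * ((K η₀ ^ k).mulVec g) s := fun s => by
    rw [hVddef]
  have hufix : ∀ s, Vd s = g s + γ * ∑ s', K η₀ s s' * Vd s' := by
    intro s
    rw [hVdapp s]
    have h2 := hneu2.2 s
    rw [h2]
  -- uniqueness of the fixed point
  have hxzero : ∀ s, DV s - Vd s = 0 := by
    refine fixpointZero hγ0 hγ1 (hK0 η₀) (hK1 η₀) (x := fun s => DV s - Vd s) ?_
    intro s
    have hsplit : ∑ s', K η₀ s s' * (DV s' - Vd s')
        = ∑ s', K η₀ s s' * DV s' - ∑ s', K η₀ s s' * Vd s' := by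
      rw [← Finset.sum_sub_distrib]
      exact Finset.sum_congr rfl fun s' _ => mul_sub _ _ _
    show DV s - Vd s = γ * ∑ s', K η₀ s s' * (DV s' - Vd s')
    rw [hsplit, hDVfix s, hufix s]
    ring
  have hDVu : DV s₀ = Vd s₀ := by have := hxzero s₀; linarith
  -- rewrite the RHS of the statement
  have hgW : ∀ s, ∑ o, ∑ σ, ∑ a,
      q s o * deriv (fun x => φ x s o σ * π x o σ a) η₀ * W η₀ s a = g s := by
    intro s
    have hterm : ∀ (o : O) (σ : Sg) (a : A),
        q s o * deriv (fun x => φ x s o σ * π x o σ a) η₀ * W η₀ s a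
        = q s o * deriv (fun x => φ x s o σ * π x o σ a) η₀ * r s a
          + γ * ∑ s', q s o * deriv (fun x => φ x s o σ * π x o σ a) η₀
              * p s a s' * V η₀ s' := by
      intro o σ a
      have hx : ∑ s', q s o * deriv (fun x => φ x s o σ * π x o σ a) η₀
            * p s a s' * V η₀ s'
          = (∑ s', p s a s' * V η₀ s')
            * (q s o * deriv (fun x => φ x s o σ * π x o σ a) η₀) := by
        rw [Finset.sum_mul]
        exact Finset.sum_congr rfl fun s' _ => by ring
      rw [hW η₀ s a, hx]
      ring
    have hpiece2 : ∑ o, ∑ σ, ∑ a, ∑ s',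
        (q s o * deriv (fun x => φ x s o σ * π x o σ a) η₀ * p s a s' * V η₀ s')
        = ∑ s', K' η₀ s s' * V η₀ s' := by
      rw [← sumComm4 (fun o σ a s' =>
        q s o * deriv (fun x => φ x s o σ * π x o σ a) η₀ * p s a s' * V η₀ s')]
      refine Finset.sum_congr rfl fun s' _ => ?_
      rw [hK'app, Finset.sum_mul]
      refine Finset.sum_congr rfl fun o _ => ?_
      rw [Finset.sum_mul]
      refine Finset.sum_congr rfl fun σ _ => ?_
      rw [Finset.sum_mul]
    calc ∑ o, ∑ σ, ∑ a, q s o * deriv (fun x => φ x s o σ * π x o σ a) η₀ * W η₀ s a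
        = ∑ o, ∑ σ, ∑ a,
            (q s o * deriv (fun x => φ x s o σ * π x o σ a) η₀ * r s a
              + γ * ∑ s', q s o * deriv (fun x => φ x s o σ * π x o σ a) η₀
                  * p s a s' * V η₀ s') :=
          Finset.sum_congr rfl fun o _ => Finset.sum_congr rfl fun σ _ =>
            Finset.sum_congr rfl fun a _ => hterm o σ a
      _ = (∑ o, ∑ σ, ∑ a, q s o * deriv (fun x => φ x s o σ * π x o σ a) η₀ * r s a)
          + ∑ o, ∑ σ, ∑ a, γ * ∑ s',
              q s o * deriv (fun x => φ x s o σ * π x o σ a) η₀ * p s a s' * V η₀ s' := by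
          simp only [Finset.sum_add_distrib]
      _ = ρ' η₀ s + γ * ∑ s', K' η₀ s s' * V η₀ s' := by
          have h2 : ∑ o, ∑ σ, ∑ a, γ * ∑ s',
              q s o * deriv (fun x => φ x s o σ * π x o σ a) η₀ * p s a s' * V η₀ s'
              = γ * ∑ s', K' η₀ s s' * V η₀ s' := by
            simp only [← Finset.mul_sum]
            rw [hpiece2]
          rw [hρ'app η₀ s, h2]
      _ = g s := (hgapp s).symm
  have hRHS : (∑' k : ℕ, γ ^ k * ∑ s, ∑ o, ∑ σ, ∑ a,
      (K η₀ ^ k) s₀ s * q s o * deriv (fun η => φ η s o σ * π η o σ a) η₀ * W η₀ s a)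
      = Vd s₀ := by
    rw [hVdapp s₀]
    refine tsum_congr fun k => ?_
    congr 1
    have hmv : ((K η₀ ^ k).mulVec g) s₀ = ∑ s, (K η₀ ^ k) s₀ s * g s := by
      simp [Matrix.mulVec, dotProduct]
    rw [hmv]
    refine Finset.sum_congr rfl fun s _ => ?_
    rw [← hgW s, Finset.mul_sum]
    refine Finset.sum_congr rfl fun o _ => ?_
    rw [Finset.mul_sum]
    refine Finset.sum_congr rfl fun σ _ => ?_
    rw [Finset.mul_sum]
    refine Finset.sum_congr rfl fun a _ => ?_
    ring
  refine ⟨(hVd s₀).differentiableAt, ?_⟩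
  calc deriv (fun η => V η s₀) η₀ = DV s₀ := (hVd s₀).deriv
    _ = Vd s₀ := hDVu
    _ = _ := hRHS.symm
end

section
/- (Signaling gradient lemma, log-derivative form.) Under the setup of the parameterized finite Markov signaling game — finite nonempty types S, O, Σ, A; stochastic kernels q : S → O → ℝ and p : S → A → S → ℝ; reward r : S → A → ℝ; discount 0 ≤ γ < 1; parameterized stochastic kernels φ : ℝ → S → O → Σ → ℝ and π : ℝ → O → Σ → A → ℝ with every entry map continuously differentiable in η; and with K η, ρ η, V η, W η defined by (K η) s s' = ∑_{o,σ,a} q s o * φ η s o σ * π η o σ a * p s a s', (ρ η) s = ∑_{o,σ,a} q s o * φ η s o σ * π η o σ a * r s a, (V η) s = ∑'_{k:ℕ} γ^k * ((((K η)^k).mulVec (ρ η)) s), (W η) s a = r s a + γ * ∑_{s'} p s a s' * (V η) s' — assume additionally that φ η₀ s o σ > 0 and π η₀ o σ a > 0 for all s, o, σ, a. Then for every s₀ ∈ S, deriv (fun η => (V η) s₀) η₀ = ∑'_{k:ℕ} γ^k * ∑_{s,o,σ,a} ((K η₀)^k) s₀ s * q s o * φ η₀ s o σ * π η₀ o σ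 a * (W η₀) s a * ( deriv (fun η => Real.log (φ η s o σ)) η₀ + deriv (fun η => Real.log (π η o σ a)) η₀ ). -/
set_option linter.unusedSectionVars false
set_option maxHeartbeats 1000000

namespace StmtAux

section

attribute [local instance] Matrix.linftyOpNormedRing Matrix.linftyOpNormedAlgebra

variable {S : Type*} [Fintype S] [DecidableEq S]

noncomputable def evalCLM (i j : S) : Matrix S S ℝ →L[ℝ] ℝ :=
  LinearMap.toContinuousLinearMap
    { toFun := fun M => M i j
      map_add' := fun _ _ => rfl
      map_smul' := fun _ _ => rfl }

noncomputable def mulVecEvalCLM (v : S → ℝ) (s : S) : Matrix S S ℝ →L[ℝ] ℝ :=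
  LinearMap.toContinuousLinearMap
    { toFun := fun M => M.mulVec v s
      map_add' := fun M N => by simp [Matrix.add_mulVec]
      map_smul' := fun c M => by simp [Matrix.smul_mulVec] }

lemma norm_le_one_of_stochastic (M : Matrix S S ℝ) (h0 : ∀ i j, 0 ≤ M i j)
    (h1 : ∀ i, ∑ j, M i j = 1) : ‖M‖ ≤ 1 := by
  rw [Matrix.linfty_opNorm_def]
  rw [show (1:ℝ) = ((1:NNReal):ℝ) by norm_num]
  norm_cast
  apply Finset.sup_le
  intro i _
  rw [← NNReal.coe_le_coe]
  push_cast
  have e : ∀ j, ‖M i j‖ = M i j := fun j => Real.norm_of_nonneg (h0 i j)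
  simp [e, h1]

lemma hasSum_neumann (γ : ℝ) (M : Matrix S S ℝ) (h : ‖γ • M‖ < 1) (v : S → ℝ) (s : S) :
    HasSum (fun k : ℕ => γ ^ k * ((M ^ k).mulVec v) s)
      (((Ring.inverse (1 - γ • M)).mulVec v) s) := by
  haveI := FiniteDimensional.complete ℝ (Matrix S S ℝ)
  have h1 := (hasSum_geom_series_inverse (γ • M) h).mapL (mulVecEvalCLM v s)
  convert h1 using 2 with k
  simp [mulVecEvalCLM, smul_pow, Matrix.smul_mulVec]
  rfl

lemma hasDerivAt_matrix {K : ℝ → Matrix S S ℝ} {K' : Matrix S S ℝ} {x : ℝ}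
    (h : ∀ i j, HasDerivAt (fun η => K η i j) (K' i j) x) :
    HasDerivAt K K' x := by
  have e : K = fun η => ∑ i : S, ∑ j : S, K η i j • Matrix.single i j (1:ℝ) := by
    funext η
    conv_lhs => rw [Matrix.matrix_eq_sum_single (K η)]
    simp [Matrix.smul_single]
  have e2 : K' = ∑ i : S, ∑ j : S, K' i j • Matrix.single i j (1:ℝ) := by
    conv_lhs => rw [Matrix.matrix_eq_sum_single K']
    simp [Matrix.smul_single]
  rw [e, e2]
  exact HasDerivAt.fun_sum fun i _ => HasDerivAt.fun_sum fun j _ => (h i j).smul_const (Matrix.single i j (1:ℝ))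

lemma hasDerivAt_entry {K : ℝ → Matrix S S ℝ} {K' : Matrix S S ℝ} {x : ℝ}
    (h : HasDerivAt K K' x) (i j : S) :
    HasDerivAt (fun η => K η i j) (K' i j) x := by
  have := (evalCLM (S := S) i j).hasFDerivAt.comp_hasDerivAt x h
  simp [evalCLM] at this
  exact this

lemma hasDerivAt_inverse_one_sub {K : ℝ → Matrix S S ℝ} {K' : Matrix S S ℝ} {x : ℝ}
    (hK : HasDerivAt K K' x) (γ : ℝ) (h : ‖γ • K x‖ < 1) :
    HasDerivAt (fun η => Ring.inverse (1 - γ • K η))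
      (Ring.inverse (1 - γ • K x) * (γ • K') * Ring.inverse (1 - γ • K x)) x := by
  haveI := FiniteDimensional.complete ℝ (Matrix S S ℝ)
  set u : (Matrix S S ℝ)ˣ := Units.oneSub (γ • K x) h with hu
  have hx : HasDerivAt (fun η => 1 - γ • K η) (-(γ • K')) x := (hK.const_smul γ).const_sub 1
  have hinv : HasFDerivAt Ring.inverse
      (-(ContinuousLinearMap.mulLeftRight ℝ (Matrix S S ℝ)) ↑u⁻¹ ↑u⁻¹) (1 - γ • K x) := by
    have := hasFDerivAt_ringInverse (𝕜 := ℝ) u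
    simpa [hu] using this
  have hc := hinv.comp_hasDerivAt x hx
  have huinv : (↑u⁻¹ : Matrix S S ℝ) = Ring.inverse (1 - γ • K x) := by
    rw [← Ring.inverse_unit u]; simp [hu]
  refine hc.congr_deriv ?_
  simp [ContinuousLinearMap.mulLeftRight_apply, huinv]

end

lemma sum_swap4 {β O Sg A : Type*} [Fintype β] [Fintype O] [Fintype Sg] [Fintype A]
    (F : β → O → Sg → A → ℝ) :
    ∑ b, ∑ o, ∑ σ, ∑ a, F b o σ a = ∑ o, ∑ σ, ∑ a, ∑ b, F b o σ a := by
  rw [Finset.sum_comm]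
  refine Finset.sum_congr rfl fun o _ => ?_
  rw [Finset.sum_comm]
  refine Finset.sum_congr rfl fun σ _ => ?_
  exact Finset.sum_comm

end StmtAux

open StmtAux


/-- Signaling gradient lemma (log-derivative / score-function form): under
positivity of `φ` and `π` at `η₀`, the derivative of the sender's value
function is an expectation of `W(s,a)` times the sum of the score functions
`∇ log φ + ∇ log π`. -/
theorem stmt_4 {S O Sg A : Type*}
    [Fintype S] [Fintype O] [Fintype Sg] [Fintype A]
    [Nonempty S] [Nonempty O] [Nonempty Sg] [Nonempty A] [DecidableEq S]
    (q : S → O → ℝ) (p : S → A → S → ℝ) (r : S → A → ℝ)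
    (γ : ℝ) (hγ0 : 0 ≤ γ) (hγ1 : γ < 1)
    (φ : ℝ → S → O → Sg → ℝ) (π : ℝ → O → Sg → A → ℝ)
    (hq0 : ∀ s o, 0 ≤ q s o) (hq1 : ∀ s, ∑ o, q s o = 1)
    (hp0 : ∀ s a s', 0 ≤ p s a s') (hp1 : ∀ s a, ∑ s', p s a s' = 1)
    (hφ0 : ∀ η s o σ, 0 ≤ φ η s o σ) (hφ1 : ∀ η s o, ∑ σ, φ η s o σ = 1)
    (hπ0 : ∀ η o σ a, 0 ≤ π η o σ a) (hπ1 : ∀ η o σ, ∑ a, π η o σ a = 1)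
    (hφC : ∀ s o σ, ContDiff ℝ 1 (fun η => φ η s o σ))
    (hπC : ∀ o σ a, ContDiff ℝ 1 (fun η => π η o σ a))
    (K : ℝ → Matrix S S ℝ)
    (hK : ∀ η s s', K η s s' = ∑ o, ∑ σ, ∑ a, q s o * φ η s o σ * π η o σ a * p s a s')
    (ρ : ℝ → S → ℝ)
    (hρ : ∀ η s, ρ η s = ∑ o, ∑ σ, ∑ a, q s o * φ η s o σ * π η o σ a * r s a)
    (V : ℝ → S → ℝ)
    (hV : ∀ η s, V η s = ∑' k : ℕ, γ ^ k * (((K η) ^ k).mulVec (ρ η)) s)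
    (W : ℝ → S → A → ℝ)
    (hW : ∀ η s a, W η s a = r s a + γ * ∑ s', p s a s' * V η s')
    (η₀ : ℝ)
    (hφpos : ∀ s o σ, 0 < φ η₀ s o σ)
    (hπpos : ∀ o σ a, 0 < π η₀ o σ a) :
    ∀ s₀ : S,
    deriv (fun η => V η s₀) η₀ =
      ∑' k : ℕ, γ ^ k * ∑ s, ∑ o, ∑ σ, ∑ a,
        ((K η₀) ^ k) s₀ s * q s o * φ η₀ s o σ * π η₀ o σ a * W η₀ s a *
          (deriv (fun η => Real.log (φ η s o σ)) η₀ +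
           deriv (fun η => Real.log (π η o σ a)) η₀) := by
  intro s₀
  letI : NormedRing (Matrix S S ℝ) := Matrix.linftyOpNormedRing
  letI : NormedAlgebra ℝ (Matrix S S ℝ) := Matrix.linftyOpNormedAlgebra
  -- entry derivatives of φ and π
  set φ' : S → O → Sg → ℝ := fun s o σ => deriv (fun η => φ η s o σ) η₀ with hφ'
  set π' : O → Sg → A → ℝ := fun o σ a => deriv (fun η => π η o σ a) η₀ with hπ'
  have hφd : ∀ s o σ, HasDerivAt (fun η => φ η s o σ) (φ' s o σ) η₀ := fun s o σ =>
    (((hφC s o σ).differentiable one_ne_zero) η₀).hasDerivAt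
  have hπd : ∀ o σ a, HasDerivAt (fun η => π η o σ a) (π' o σ a) η₀ := fun o σ a =>
    (((hπC o σ a).differentiable one_ne_zero) η₀).hasDerivAt
  -- stochasticity of K
  have hK0 : ∀ η s s', 0 ≤ K η s s' := by
    intro η s s'; rw [hK]
    refine Finset.sum_nonneg fun o _ => Finset.sum_nonneg fun σ _ =>
      Finset.sum_nonneg fun a _ => ?_
    exact mul_nonneg (mul_nonneg (mul_nonneg (hq0 s o) (hφ0 η s o σ)) (hπ0 η o σ a)) (hp0 s a s')
  have hKrow : ∀ η s, ∑ s', K η s s' = 1 := by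
    intro η s
    simp only [hK]
    rw [sum_swap4 (fun s' o σ a => q s o * φ η s o σ * π η o σ a * p s a s')]
    simp only [← Finset.mul_sum, hp1, mul_one, hπ1, hφ1, hq1]
  have hxlt : ∀ η, ‖γ • K η‖ < 1 := by
    intro η
    have h1 : ‖K η‖ ≤ 1 := norm_le_one_of_stochastic _ (hK0 η) (hKrow η)
    have h2 : ‖γ • K η‖ ≤ γ := by
      rw [norm_smul, Real.norm_eq_abs, abs_of_nonneg hγ0]
      nlinarith [norm_nonneg (K η)]
    linarith
  set N : ℝ → Matrix S S ℝ := fun η => Ring.inverse (1 - γ • K η) with hN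
  have hVrep : ∀ η s, V η s = ((N η).mulVec (ρ η)) s := fun η s => by
    rw [hV]; exact (hasSum_neumann γ (K η) (hxlt η) (ρ η) s).tsum_eq
  -- derivative of K and ρ
  set Kd : Matrix S S ℝ := Matrix.of fun s s' =>
    ∑ o, ∑ σ, ∑ a, q s o * (φ' s o σ * π η₀ o σ a + φ η₀ s o σ * π' o σ a) * p s a s' with hKdDef
  set ρd : S → ℝ := fun s =>
    ∑ o, ∑ σ, ∑ a, q s o * (φ' s o σ * π η₀ o σ a + φ η₀ s o σ * π' o σ a) * r s a with hρdDef
  have hKdE : ∀ s s', HasDerivAt (fun η => K η s s') (Kd s s') η₀ := by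
    intro s s'
    simp only [hK]
    refine HasDerivAt.fun_sum fun o _ => HasDerivAt.fun_sum fun σ _ => HasDerivAt.fun_sum fun a _ => ?_
    have h := (((hφd s o σ).const_mul (q s o)).mul (hπd o σ a)).mul_const (p s a s')
    refine h.congr_deriv ?_
    ring
  have hρdE : ∀ s, HasDerivAt (fun η => ρ η s) (ρd s) η₀ := by
    intro s
    simp only [hρ]
    refine HasDerivAt.fun_sum fun o _ => HasDerivAt.fun_sum fun σ _ => HasDerivAt.fun_sum fun a _ => ?_
    have h := (((hφd s o σ).const_mul (q s o)).mul (hπd o σ a)).mul_const (r s a)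
    refine h.congr_deriv ?_
    ring
  have hKdM : HasDerivAt K Kd η₀ := hasDerivAt_matrix hKdE
  have hNd : HasDerivAt N (N η₀ * (γ • Kd) * N η₀) η₀ :=
    hasDerivAt_inverse_one_sub hKdM γ (hxlt η₀)
  have hNE : ∀ i j, HasDerivAt (fun η => N η i j) ((N η₀ * (γ • Kd) * N η₀) i j) η₀ :=
    hasDerivAt_entry hNd
  -- derivative of V at s₀
  have hVfun : (fun η => V η s₀) = fun η => ∑ j, N η s₀ j * ρ η j := by
    funext η
    rw [hVrep]
    simp [Matrix.mulVec, dotProduct]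
  set dV : ℝ := ∑ j, ((N η₀ * (γ • Kd) * N η₀) s₀ j * ρ η₀ j + N η₀ s₀ j * ρd j) with hdV
  have hVd : HasDerivAt (fun η => V η s₀) dV η₀ := by
    rw [hVfun]
    exact HasDerivAt.fun_sum fun j _ => (hNE s₀ j).mul (hρdE j)
  -- rewrite dV as N₀ applied to the "advantage" vector g
  set g : S → ℝ := fun s => ρd s + γ * (Kd.mulVec (V η₀)) s with hg
  have hdVg : dV = ((N η₀).mulVec g) s₀ := by
    have e1 : ∑ j, (N η₀ * (γ • Kd) * N η₀) s₀ j * ρ η₀ j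
        = ((N η₀).mulVec (γ • Kd.mulVec (V η₀))) s₀ := by
      have : (N η₀ * (γ • Kd) * N η₀).mulVec (ρ η₀)
          = (N η₀).mulVec ((γ • Kd).mulVec ((N η₀).mulVec (ρ η₀))) := by
        rw [Matrix.mulVec_mulVec, Matrix.mulVec_mulVec]
      have e2 : (N η₀).mulVec (ρ η₀) = V η₀ := funext fun s => (hVrep η₀ s).symm
      calc ∑ j, (N η₀ * (γ • Kd) * N η₀) s₀ j * ρ η₀ j
          = ((N η₀ * (γ • Kd) * N η₀).mulVec (ρ η₀)) s₀ := by
            simp [Matrix.mulVec, dotProduct]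
        _ = ((N η₀).mulVec ((γ • Kd).mulVec ((N η₀).mulVec (ρ η₀)))) s₀ := by rw [this]
        _ = ((N η₀).mulVec (γ • Kd.mulVec (V η₀))) s₀ := by
            rw [e2, Matrix.smul_mulVec]
    have e3 : ∑ j, N η₀ s₀ j * ρd j = ((N η₀).mulVec ρd) s₀ := by
      simp [Matrix.mulVec, dotProduct]
    have hgsplit : g = ρd + γ • Kd.mulVec (V η₀) := by
      funext s; simp [hg, Pi.add_apply, Pi.smul_apply, smul_eq_mul]
    rw [hdV, Finset.sum_add_distrib, e1, e3, hgsplit, Matrix.mulVec_add]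
    rw [Pi.add_apply]
    exact add_comm _ _
  -- identify g with the score-function form
  have hgform : ∀ s, g s = ∑ o, ∑ σ, ∑ a,
      q s o * φ η₀ s o σ * π η₀ o σ a * W η₀ s a *
        (deriv (fun η => Real.log (φ η s o σ)) η₀ +
         deriv (fun η => Real.log (π η o σ a)) η₀) := by
    intro s
    have hlogφ : ∀ o σ, deriv (fun η => Real.log (φ η s o σ)) η₀ = φ' s o σ / φ η₀ s o σ :=
      fun o σ => ((hφd s o σ).log (ne_of_gt (hφpos s o σ))).deriv
    have hlogπ : ∀ o σ a, deriv (fun η => Real.log (π η o σ a)) η₀ = π' o σ a / π η₀ o σ a :=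
      fun o σ a => ((hπd o σ a).log (ne_of_gt (hπpos o σ a))).deriv
    have hKdv : (Kd.mulVec (V η₀)) s = ∑ o, ∑ σ, ∑ a,
        q s o * (φ' s o σ * π η₀ o σ a + φ η₀ s o σ * π' o σ a) *
          ∑ s', p s a s' * V η₀ s' := by
      have : (Kd.mulVec (V η₀)) s = ∑ s', Kd s s' * V η₀ s' := by
        simp [Matrix.mulVec, dotProduct]
      rw [this]
      simp only [hKdDef, Matrix.of_apply, Finset.sum_mul]
      rw [sum_swap4 (fun s' o σ a =>
        q s o * (φ' s o σ * π η₀ o σ a + φ η₀ s o σ * π' o σ a) * p s a s' * V η₀ s')]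
      refine Finset.sum_congr rfl fun o _ => Finset.sum_congr rfl fun σ _ =>
        Finset.sum_congr rfl fun a _ => ?_
      rw [Finset.mul_sum]
      refine Finset.sum_congr rfl fun s' _ => by ring
    simp only [hg, hρdDef]
    rw [hKdv, Finset.mul_sum, ← Finset.sum_add_distrib]
    refine Finset.sum_congr rfl fun o _ => ?_
    rw [Finset.mul_sum, ← Finset.sum_add_distrib]
    refine Finset.sum_congr rfl fun σ _ => ?_
    rw [Finset.mul_sum, ← Finset.sum_add_distrib]
    refine Finset.sum_congr rfl fun a _ => ?_
    rw [hlogφ, hlogπ, hW]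
    have h1 : φ η₀ s o σ ≠ 0 := ne_of_gt (hφpos s o σ)
    have h2 : π η₀ o σ a ≠ 0 := ne_of_gt (hπpos o σ a)
    field_simp
  -- assemble
  rw [hVd.deriv, hdVg]
  rw [← (hasSum_neumann γ (K η₀) (hxlt η₀) g s₀).tsum_eq]
  refine tsum_congr fun k => ?_
  congr 1
  have : (((K η₀) ^ k).mulVec g) s₀ = ∑ s, ((K η₀) ^ k) s₀ s * g s := by
    simp [Matrix.mulVec, dotProduct]
  rw [this]
  refine Finset.sum_congr rfl fun s _ => ?_
  rw [hgform s, Finset.mul_sum]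
  refine Finset.sum_congr rfl fun o _ => ?_
  rw [Finset.mul_sum]
  refine Finset.sum_congr rfl fun σ _ => ?_
  rw [Finset.mul_sum]
  refine Finset.sum_congr rfl fun a _ => ?_
  ring
end

section
/- (Derivative bound for powers of a differentiable family of stochastic matrices.) Let S be a finite nonempty type and let K : ℝ → Matrix S S ℝ be such that for every η the matrix K η is row-stochastic (nonnegative entries, every row sums to 1), and every entry map η ↦ (K η) s s' is differentiable at η₀ with |deriv (fun η => (K η) s s') η₀| ≤ M for all s, s'. Then for every k : ℕ, every f : S → ℝ, and every s ∈ S, the map η ↦ (((K η)^k).mulVec f) s is differentiable at η₀ and |deriv (fun η => (((K η)^k).mulVec f) s) η₀| ≤ k * (Fintype.card S) * M * (⨆ x, |f x|). -/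
/-- Derivative bound for powers of a differentiable family of row-stochastic
matrices: if every entry of `K η` has derivative bounded by `M` at `η₀`, then
`η ↦ ((K η)^k).mulVec f s` is differentiable at `η₀` with derivative bounded
by `k * |S| * M * ‖f‖∞`. -/
theorem stmt_7 {S : Type*} [Fintype S] [Nonempty S] [DecidableEq S]
    (K : ℝ → Matrix S S ℝ) (η₀ M : ℝ)
    (hK0 : ∀ η s s', 0 ≤ K η s s')
    (hK1 : ∀ η s, ∑ s', K η s s' = 1)
    (hdiff : ∀ s s', DifferentiableAt ℝ (fun η => K η s s') η₀)
    (hbound : ∀ s s', |deriv (fun η => K η s s') η₀| ≤ M) :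
    ∀ (k : ℕ) (f : S → ℝ) (s : S),
      DifferentiableAt ℝ (fun η => (((K η) ^ k).mulVec f) s) η₀ ∧
      |deriv (fun η => (((K η) ^ k).mulVec f) s) η₀| ≤
        (k : ℝ) * (Fintype.card S : ℝ) * M * (⨆ x, |f x|) := by
  intro k f
  set C := ⨆ x, |f x| with hCdef
  have hC : ∀ x, |f x| ≤ C := fun x => le_ciSup (f := fun x => |f x|) (Set.Finite.bddAbove (Set.finite_range _)) x
  have hC0 : 0 ≤ C := (abs_nonneg _).trans (hC (Classical.arbitrary S))
  have hM0 : 0 ≤ M := (abs_nonneg _).trans (hbound (Classical.arbitrary S) (Classical.arbitrary S))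
  -- key rewrite for successor step
  have key : ∀ (m : ℕ) (s : S), (fun η => (((K η) ^ (m+1)).mulVec f) s)
      = fun η => ∑ s', K η s s' * (((K η) ^ m).mulVec f) s' := by
    intro m s
    funext η
    rw [pow_succ']
    simp only [Matrix.mulVec, Matrix.mul_apply, dotProduct, Finset.sum_mul, Finset.mul_sum,
      mul_assoc]
    rw [Finset.sum_comm]
  suffices h : ∀ (m : ℕ),
      (∀ η s, |(((K η) ^ m).mulVec f) s| ≤ C) ∧
      ∀ s, DifferentiableAt ℝ (fun η => (((K η) ^ m).mulVec f) s) η₀ ∧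
        |deriv (fun η => (((K η) ^ m).mulVec f) s) η₀| ≤
          (m : ℝ) * (Fintype.card S : ℝ) * M * C by
    exact fun s => (h k).2 s
  intro m
  induction m with
  | zero =>
    constructor
    · intro η s; simpa using hC s
    · intro s
      have : (fun η => (((K η) ^ 0).mulVec f) s) = fun _ => f s := by
        funext η; simp
      rw [this]
      refine ⟨differentiableAt_const _, ?_⟩
      simp
  | succ m ih =>
    obtain ⟨ihb, ihd⟩ := ih
    have hdiffm : ∀ s', DifferentiableAt ℝ (fun η => (((K η) ^ m).mulVec f) s') η₀ :=
      fun s' => (ihd s').1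
    constructor
    · intro η s
      rw [congrFun (key m s) η]
      calc |∑ s', K η s s' * (((K η) ^ m).mulVec f) s'|
          ≤ ∑ s', |K η s s' * (((K η) ^ m).mulVec f) s'| := Finset.abs_sum_le_sum_abs _ _
        _ ≤ ∑ s', K η s s' * C := by
            refine Finset.sum_le_sum fun s' _ => ?_
            rw [abs_mul, abs_of_nonneg (hK0 η s s')]
            exact mul_le_mul_of_nonneg_left (ihb η s') (hK0 η s s')
        _ = C := by rw [← Finset.sum_mul, hK1, one_mul]
    · intro s
      rw [key m]
      have hdterm : ∀ s' ∈ Finset.univ, DifferentiableAt ℝ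
          (fun η => K η s s' * (((K η) ^ m).mulVec f) s') η₀ :=
        fun s' _ => (hdiff s s').mul (hdiffm s')
      refine ⟨DifferentiableAt.fun_sum hdterm, ?_⟩
      rw [deriv_fun_sum hdterm]
      have hterm : ∀ s' ∈ Finset.univ,
          |deriv (fun η => K η s s' * (((K η) ^ m).mulVec f) s') η₀|
          ≤ M * C + K η₀ s s' * ((m : ℝ) * (Fintype.card S : ℝ) * M * C) := by
        intro s' _
        rw [deriv_fun_mul (hdiff s s') (hdiffm s')]
        refine (abs_add_le _ _).trans (add_le_add ?_ ?_)
        · rw [abs_mul]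
          exact mul_le_mul (hbound s s') (ihb η₀ s') (abs_nonneg _) hM0
        · rw [abs_mul, abs_of_nonneg (hK0 η₀ s s')]
          exact mul_le_mul_of_nonneg_left ((ihd s').2) (hK0 η₀ s s')
      calc |∑ s', deriv (fun η => K η s s' * (((K η) ^ m).mulVec f) s') η₀|
          ≤ ∑ s', |deriv (fun η => K η s s' * (((K η) ^ m).mulVec f) s') η₀| :=
            Finset.abs_sum_le_sum_abs _ _
        _ ≤ ∑ s' : S, (M * C + K η₀ s s' * ((m : ℝ) * (Fintype.card S : ℝ) * M * C)) :=
            Finset.sum_le_sum hterm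
        _ = (Fintype.card S : ℝ) * (M * C) + (m : ℝ) * (Fintype.card S : ℝ) * M * C := by
            rw [Finset.sum_add_distrib, Finset.sum_const, Finset.card_univ, ← Finset.sum_mul,
              hK1, one_mul, nsmul_eq_mul]
        _ ≤ ((m : ℕ) + 1 : ℝ) * (Fintype.card S : ℝ) * M * C := by ring_nf; nlinarith [hC0, hM0]
        _ = ((m + 1 : ℕ) : ℝ) * (Fintype.card S : ℝ) * M * C := by push_cast; ring
end
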